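/- Fix k ≥ 2, m ≥ 1, ε ∈ (0,1/k]. Let X_1,…,X_n be i.i.d. real random variables with E[X_1⁴] < ∞, set ℓ(θ) = E[log f_θ(X_1)], and let D satisfy E[(log f_θ(X_1))²] ≤ D for all θ ∈ S_{m,ε}. Suppose L : ℝ → [0,∞) satisfies |log f_θ(x) − log f_{θ'}(x)| ≤ L(x)·‖θ − θ'‖ for all θ, θ' ∈ S_{m,ε} and all x ∈ ℝ, where ‖θ − θ'‖ = ‖μ − μ'‖₂ + ‖log σ − log σ'‖₂ + ‖π − π'‖₁ (log σ taken componentwise), and suppose m₁ := E[L(X_1)] ∈ (0,∞) and m₂ := E[L(X_1)²] < ∞. Fix ε' ∈ (0,1) and a finite set {θ_1,…,θ_M} ⊆ S_{m,ε} such that every θ ∈ S_{m,ε} lies within ‖·‖-distance δ := ε'/(6·m₁) of some θ_j. Then P( sup over θ ∈ S_{m,ε} of |(1/n)·Σ_{i=1}^n log f_θ(X_i) − ℓ(θ)| > ε' ) ≤ (m₂ − m₁²)/(n·m₁²) + 9·M·D/(n·ε'²). -/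

import Mathlib

open MeasureTheory ProbabilityTheory Filter

/-- Gaussian density with mean `μ` and standard deviation `σ`. -/
noncomputable def gaussDensity (x μ σ : ℝ) : ℝ :=
  (Real.sqrt (2 * Real.pi))⁻¹ * σ⁻¹ * Real.exp (-(x - μ) ^ 2 / (2 * σ ^ 2))

/-- Mixture parameter: weights, means, standard deviations. -/
abbrev MixParam (k : ℕ) := (Fin k → ℝ) × (Fin k → ℝ) × (Fin k → ℝ)

/-- `k`-component Gaussian mixture density. -/
noncomputable def mixDensity (k : ℕ) (θ : MixParam k) (x : ℝ) : ℝ :=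
  ∑ j, θ.1 j * gaussDensity x (θ.2.1 j) (θ.2.2 j)

/-- Membership in the compact sieve `S_{m,ε}`. -/
def memSieve (k : ℕ) (m ε : ℝ) (θ : MixParam k) : Prop :=
  (∀ j, 0 ≤ θ.1 j) ∧ (∑ j, θ.1 j = 1) ∧
    ∀ j, ε ≤ θ.1 j ∧ |θ.2.1 j| ≤ m ∧ Real.exp (-m) ≤ θ.2.2 j ∧ θ.2.2 j ≤ Real.exp m

/-- Product norm distance `‖θ − θ'‖ = ‖μ − μ'‖₂ + ‖log σ − log σ'‖₂ + ‖π − π'‖₁`. -/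
noncomputable def paramDist (k : ℕ) (θ θ' : MixParam k) : ℝ :=
  Real.sqrt (∑ j, (θ.2.1 j - θ'.2.1 j) ^ 2)
    + Real.sqrt (∑ j, (Real.log (θ.2.2 j) - Real.log (θ'.2.2 j)) ^ 2)
    + ∑ j, |θ.1 j - θ'.1 j|

section Helpers

lemma paramDist_nonneg (k : ℕ) (θ θ' : MixParam k) : 0 ≤ paramDist k θ θ' := by
  unfold paramDist
  have h1 : (0:ℝ) ≤ Real.sqrt (∑ j, (θ.2.1 j - θ'.2.1 j) ^ 2) := Real.sqrt_nonneg _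
  have h2 : (0:ℝ) ≤ Real.sqrt (∑ j, (Real.log (θ.2.2 j) - Real.log (θ'.2.2 j)) ^ 2) :=
    Real.sqrt_nonneg _
  have h3 : (0:ℝ) ≤ ∑ j, |θ.1 j - θ'.1 j| :=
    Finset.sum_nonneg fun j _ => abs_nonneg _
  linarith

lemma memSieve_basepoint (k : ℕ) (m ε : ℝ) (hk : 2 ≤ k) (hm : 1 ≤ m) (hε : 0 < ε)
    (hεk : ε ≤ 1 / k) :
    memSieve k m ε (fun _ => (k : ℝ)⁻¹, fun _ => 0, fun _ => 1) := by
  have hk0 : (0:ℝ) < k := by exact_mod_cast (by omega : 0 < k)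
  refine ⟨fun j => by positivity, ?_, fun j => ⟨?_, ?_, ?_, ?_⟩⟩
  · rw [Finset.sum_const, Finset.card_univ, Fintype.card_fin, nsmul_eq_mul,
      mul_inv_cancel₀ hk0.ne']
  · simpa [one_div] using hεk
  · rw [abs_zero]; linarith
  · exact Real.exp_le_one_iff.mpr (by linarith)
  · exact Real.one_le_exp (by linarith)

end Helpers

section Density

lemma sqrt_two_pi_bounds : (1:ℝ) ≤ Real.sqrt (2 * Real.pi) ∧ Real.sqrt (2 * Real.pi) ≤ 3 := by
  constructor
  · rw [show (1:ℝ) = Real.sqrt 1 by simp]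
    exact Real.sqrt_le_sqrt (by nlinarith [Real.pi_gt_three])
  · rw [show (3:ℝ) = Real.sqrt 9 by
      rw [show (9:ℝ) = 3 ^ 2 by norm_num, Real.sqrt_sq]; norm_num]
    exact Real.sqrt_le_sqrt (by nlinarith [Real.pi_lt_d2])

lemma gaussDensity_pos {x μ σ : ℝ} (hσ : 0 < σ) : 0 < gaussDensity x μ σ := by
  unfold gaussDensity
  have h2π : (0:ℝ) < Real.sqrt (2 * Real.pi) := Real.sqrt_pos.mpr (by positivity)
  positivity

lemma mixDensity_pos {k : ℕ} {m ε : ℝ} (hk : 1 ≤ k) (hε : 0 < ε) {θ : MixParam k}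
    (hθ : memSieve k m ε θ) (x : ℝ) : 0 < mixDensity k θ x := by
  obtain ⟨hπ0, hπsum, hprop⟩ := hθ
  have hkpos : 0 < k := hk
  refine Finset.sum_pos' (fun j _ => ?_) ⟨⟨0, hkpos⟩, Finset.mem_univ _, ?_⟩
  · have hσ : 0 < θ.2.2 j := lt_of_lt_of_le (Real.exp_pos _) (hprop j).2.2.1
    exact mul_nonneg (hπ0 j) (gaussDensity_pos hσ).le
  · have hσ : 0 < θ.2.2 ⟨0, hkpos⟩ :=
      lt_of_lt_of_le (Real.exp_pos _) (hprop ⟨0, hkpos⟩).2.2.1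
    exact mul_pos (lt_of_lt_of_le hε (hprop _).1) (gaussDensity_pos hσ)

lemma gaussDensity_le_exp {m x μ σ : ℝ} (h : Real.exp (-m) ≤ σ) :
    gaussDensity x μ σ ≤ Real.exp m := by
  have hσ : 0 < σ := lt_of_lt_of_le (Real.exp_pos _) h
  have h1 : (Real.sqrt (2 * Real.pi))⁻¹ ≤ 1 := by
    rw [inv_le_one_iff₀]; right; exact sqrt_two_pi_bounds.1
  have h2 : σ⁻¹ ≤ Real.exp m := by
    rw [show Real.exp m = (Real.exp (-m))⁻¹ by rw [Real.exp_neg, inv_inv]]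
    exact inv_anti₀ (Real.exp_pos _) h
  have h3 : Real.exp (-(x - μ) ^ 2 / (2 * σ ^ 2)) ≤ 1 :=
    Real.exp_le_one_iff.mpr
      (div_nonpos_of_nonpos_of_nonneg (neg_nonpos.mpr (sq_nonneg _)) (by positivity))
  have h0a : (0:ℝ) < (Real.sqrt (2 * Real.pi))⁻¹ := by
    have := sqrt_two_pi_bounds.1; positivity
  unfold gaussDensity
  calc (Real.sqrt (2 * Real.pi))⁻¹ * σ⁻¹ * Real.exp (-(x - μ) ^ 2 / (2 * σ ^ 2))
      ≤ 1 * Real.exp m * 1 := by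
        refine mul_le_mul (mul_le_mul h1 h2 (by positivity) zero_le_one) h3
          (Real.exp_pos _).le (by positivity)
    _ = Real.exp m := by ring

lemma exp_le_gaussDensity {m x μ σ : ℝ} (hm : 0 ≤ m) (hμ : |μ| ≤ m)
    (h1 : Real.exp (-m) ≤ σ) (h2 : σ ≤ Real.exp m) :
    (3:ℝ)⁻¹ * Real.exp (-m) * Real.exp (-((x ^ 2 + m ^ 2) * Real.exp (2 * m)))
      ≤ gaussDensity x μ σ := by
  have hσ : 0 < σ := lt_of_lt_of_le (Real.exp_pos _) h1
  have hc1 : (3:ℝ)⁻¹ ≤ (Real.sqrt (2 * Real.pi))⁻¹ := by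
    have h0 : (0:ℝ) < Real.sqrt (2 * Real.pi) := lt_of_lt_of_le one_pos sqrt_two_pi_bounds.1
    exact inv_anti₀ h0 sqrt_two_pi_bounds.2
  have hc2 : Real.exp (-m) ≤ σ⁻¹ := by
    rw [show Real.exp (-m) = (Real.exp m)⁻¹ by rw [Real.exp_neg]]
    exact inv_anti₀ hσ h2
  have hμ2 : μ ^ 2 ≤ m ^ 2 := by
    have := abs_le.mp hμ; nlinarith
  have hσ2 : Real.exp (-(2 * m)) ≤ σ ^ 2 := by
    have : Real.exp (-m) ^ 2 ≤ σ ^ 2 := by nlinarith [Real.exp_pos (-m)]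
    calc Real.exp (-(2 * m)) = Real.exp (-m) ^ 2 := by
          rw [← Real.exp_nat_mul]; ring_nf
      _ ≤ σ ^ 2 := this
  have hinvσ2 : (σ ^ 2)⁻¹ ≤ Real.exp (2 * m) := by
    rw [show Real.exp (2 * m) = (Real.exp (-(2 * m)))⁻¹ by rw [Real.exp_neg, inv_inv]]
    exact inv_anti₀ (Real.exp_pos _) hσ2
  have hexp : Real.exp (-((x ^ 2 + m ^ 2) * Real.exp (2 * m)))
      ≤ Real.exp (-(x - μ) ^ 2 / (2 * σ ^ 2)) := by
    apply Real.exp_le_exp.mpr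
    rw [neg_div, neg_le_neg_iff, div_le_iff₀ (by positivity : (0:ℝ) < 2 * σ ^ 2)]
    have key : (x - μ) ^ 2 ≤ (2 * x ^ 2 + 2 * m ^ 2) := by nlinarith [sq_nonneg (x + μ)]
    have key2 : (2 * x ^ 2 + 2 * m ^ 2) ≤ (x ^ 2 + m ^ 2) * Real.exp (2 * m) * (2 * σ ^ 2) := by
      have hs : 1 ≤ Real.exp (2 * m) * σ ^ 2 := by
        have := mul_le_mul_of_nonneg_left hσ2 (Real.exp_pos (2 * m)).le
        rwa [← Real.exp_add, add_neg_cancel, Real.exp_zero] at this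
      nlinarith [sq_nonneg x, sq_nonneg m, Real.exp_pos (2 * m), sq_nonneg σ]
    linarith
  have g0 : 0 < Real.exp (-(x - μ) ^ 2 / (2 * σ ^ 2)) := Real.exp_pos _
  unfold gaussDensity
  refine mul_le_mul (mul_le_mul hc1 hc2 (Real.exp_pos _).le (by positivity)) hexp
    (Real.exp_pos _).le ?_
  positivity

end Density

section LogBounds

/-- sandwich: `|log f_θ(x)| ≤ A + B x²` on the sieve. -/
lemma abs_log_mixDensity_le {k : ℕ} {m ε : ℝ} (hk : 1 ≤ k) (hm : 1 ≤ m) (hε : 0 < ε)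
    (hε1 : ε ≤ 1) {θ : MixParam k} (hθ : memSieve k m ε θ) (x : ℝ) :
    |Real.log (mixDensity k θ x)|
      ≤ (m + Real.log 3 - Real.log ε + m ^ 2 * Real.exp (2 * m))
        + Real.exp (2 * m) * x ^ 2 := by
  obtain ⟨hπ0, hπsum, hprop⟩ := hθ
  have hpos := mixDensity_pos hk hε ⟨hπ0, hπsum, hprop⟩ x
  have hm0 : (0:ℝ) ≤ m := by linarith
  -- upper bound
  have hupper : Real.log (mixDensity k θ x) ≤ m := by
    rw [Real.log_le_iff_le_exp hpos]
    calc mixDensity k θ x ≤ ∑ j, θ.1 j * Real.exp m :=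
          Finset.sum_le_sum fun j _ =>
            mul_le_mul_of_nonneg_left (gaussDensity_le_exp (hprop j).2.2.1) (hπ0 j)
      _ = Real.exp m := by rw [← Finset.sum_mul, hπsum, one_mul]
  -- lower bound
  have hkpos : 0 < k := hk
  set j0 : Fin k := ⟨0, hkpos⟩
  have hglow := exp_le_gaussDensity (x := x) hm0 (hprop j0).2.1 (hprop j0).2.2.1 (hprop j0).2.2.2
  have hflow : ε * ((3:ℝ)⁻¹ * Real.exp (-m) * Real.exp (-((x ^ 2 + m ^ 2) * Real.exp (2 * m))))
      ≤ mixDensity k θ x := by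
    have h1 : ε * ((3:ℝ)⁻¹ * Real.exp (-m) * Real.exp (-((x ^ 2 + m ^ 2) * Real.exp (2 * m))))
        ≤ θ.1 j0 * gaussDensity x (θ.2.1 j0) (θ.2.2 j0) :=
      mul_le_mul (hprop j0).1 hglow (by positivity) ((hε.trans_le (hprop j0).1).le)
    refine h1.trans ?_
    refine Finset.single_le_sum (f := fun j => θ.1 j * gaussDensity x (θ.2.1 j) (θ.2.2 j))
      (fun j _ => ?_) (Finset.mem_univ j0)
    exact mul_nonneg (hπ0 j)
      (gaussDensity_pos (lt_of_lt_of_le (Real.exp_pos _) (hprop j).2.2.1)).le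
  have hlower : Real.log ε - Real.log 3 - m - (x ^ 2 + m ^ 2) * Real.exp (2 * m)
      ≤ Real.log (mixDensity k θ x) := by
    have hc0 : (0:ℝ) < ε * ((3:ℝ)⁻¹ * Real.exp (-m)
        * Real.exp (-((x ^ 2 + m ^ 2) * Real.exp (2 * m)))) := by positivity
    have := Real.log_le_log hc0 hflow
    rw [Real.log_mul (ne_of_gt hε) (by positivity), Real.log_mul (by positivity) (by positivity),
      Real.log_mul (by positivity) (by positivity), Real.log_inv, Real.log_exp,
      Real.log_exp] at this
    linarith
  have hε0 : Real.log ε ≤ 0 := Real.log_nonpos hε.le hε1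
  have h3 : (0:ℝ) ≤ Real.log 3 := Real.log_nonneg (by norm_num)
  have hB : (0:ℝ) < Real.exp (2 * m) := Real.exp_pos _
  rw [abs_le]
  constructor
  · nlinarith [sq_nonneg x, sq_nonneg m]
  · nlinarith [sq_nonneg x, sq_nonneg m]

lemma measurable_log_mixDensity {k : ℕ} (θ : MixParam k) :
    Measurable fun x => Real.log (mixDensity k θ x) := by
  apply Real.measurable_log.comp
  apply Finset.measurable_sum
  intro j _
  apply Measurable.const_mul
  unfold gaussDensity
  apply Measurable.mul
  · exact measurable_const
  · exact (Real.measurable_exp.comp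
      ((measurable_id.sub measurable_const).pow_const 2 |>.neg.div_const _))

end LogBounds

section Continuity

variable {k : ℕ} {m ε : ℝ}

lemma sieve_sigma_pos {θ : MixParam k} (hθ : memSieve k m ε θ) (j : Fin k) :
    0 < θ.2.2 j := lt_of_lt_of_le (Real.exp_pos _) (hθ.2.2 j).2.2.1

lemma continuous_pi_coord (j : Fin k) :
    Continuous fun θ : {θ : MixParam k // memSieve k m ε θ} => θ.1.1 j :=
  (continuous_apply j).comp (continuous_fst.comp continuous_subtype_val)

lemma continuous_mu_coord (j : Fin k) :
    Continuous fun θ : {θ : MixParam k // memSieve k m ε θ} => θ.1.2.1 j :=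
  (continuous_apply j).comp (continuous_fst.comp (continuous_snd.comp continuous_subtype_val))

lemma continuous_sigma_coord (j : Fin k) :
    Continuous fun θ : {θ : MixParam k // memSieve k m ε θ} => θ.1.2.2 j :=
  (continuous_apply j).comp (continuous_snd.comp (continuous_snd.comp continuous_subtype_val))

lemma continuous_mixDensity_subtype (x : ℝ) :
    Continuous fun θ : {θ : MixParam k // memSieve k m ε θ} => mixDensity k θ.1 x := by
  unfold mixDensity
  apply continuous_finset_sum
  intro j _
  apply (continuous_pi_coord j).mul
  unfold gaussDensity
  have hσ := continuous_sigma_coord (k := k) (m := m) (ε := ε) j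
  have hσne : ∀ θ : {θ : MixParam k // memSieve k m ε θ}, θ.1.2.2 j ≠ 0 :=
    fun θ => (sieve_sigma_pos θ.2 j).ne'
  refine (continuous_const.mul (hσ.inv₀ hσne)).mul (Real.continuous_exp.comp ?_)
  refine Continuous.div (((continuous_const.sub (continuous_mu_coord j)).pow 2).neg)
    (continuous_const.mul (hσ.pow 2)) ?_
  intro θ
  have := hσne θ
  positivity

lemma continuous_log_mixDensity_subtype (hk : 1 ≤ k) (hε : 0 < ε) (x : ℝ) :
    Continuous fun θ : {θ : MixParam k // memSieve k m ε θ} =>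
      Real.log (mixDensity k θ.1 x) := by
  rw [continuous_iff_continuousAt]
  intro θ
  exact ContinuousAt.comp (f := fun θ : {θ : MixParam k // memSieve k m ε θ} =>
      mixDensity k θ.1 x)
    (Real.continuousAt_log (mixDensity_pos hk hε θ.2 x).ne')
    (continuous_mixDensity_subtype x).continuousAt

lemma continuous_paramDist_subtype (θ' : MixParam k) :
    Continuous fun θ : {θ : MixParam k // memSieve k m ε θ} => paramDist k θ.1 θ' := by
  unfold paramDist
  have hlogσ : ∀ j : Fin k, Continuous
      fun θ : {θ : MixParam k // memSieve k m ε θ} => Real.log (θ.1.2.2 j) := by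
    intro j
    rw [continuous_iff_continuousAt]
    intro θ
    exact ContinuousAt.comp (f := fun θ : {θ : MixParam k // memSieve k m ε θ} =>
        θ.1.2.2 j)
      (Real.continuousAt_log (sieve_sigma_pos θ.2 j).ne')
      (continuous_sigma_coord j).continuousAt
  refine Continuous.add (Continuous.add ?_ ?_) ?_
  · exact Real.continuous_sqrt.comp (continuous_finset_sum _ fun j _ =>
      ((continuous_mu_coord j).sub continuous_const).pow 2)
  · exact Real.continuous_sqrt.comp (continuous_finset_sum _ fun j _ =>
      ((hlogσ j).sub continuous_const).pow 2)
  · exact continuous_finset_sum _ fun j _ =>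
      ((continuous_pi_coord j).sub continuous_const).abs

end Continuity

section Chebyshev

open Finset

/-- Chebyshev for an iid sum. -/
lemma cheb_sum {Ω : Type*} [MeasureSpace Ω] [IsProbabilityMeasure (ℙ : Measure Ω)]
    (X : ℕ → Ω → ℝ)
    (hindep : iIndepFun X ℙ)
    (hident : ∀ i, IdentDistrib (X i) (X 0) ℙ ℙ)
    (g : ℝ → ℝ) (hg : Measurable g)
    (h2 : MemLp (fun ω => g (X 0 ω)) 2 ℙ)
    (n : ℕ) (hn : 1 ≤ n) (t : ℝ) (ht : 0 < t) :
    ℙ {ω | (n : ℝ) * t ≤ |(∑ i ∈ Finset.range n, g (X i ω)) - n * ∫ ω, g (X 0 ω) ∂ℙ|}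
      ≤ ENNReal.ofReal (variance (fun ω => g (X 0 ω)) ℙ / ((n : ℝ) * t ^ 2)) := by
  have hident' : ∀ i, IdentDistrib (fun ω => g (X i ω)) (fun ω => g (X 0 ω)) ℙ ℙ :=
    fun i => (hident i).comp hg
  have hY2 : ∀ i, MemLp (fun ω => g (X i ω)) 2 ℙ :=
    fun i => ((hident' i).memLp_iff).mpr h2
  have hn0 : (0:ℝ) < n := by exact_mod_cast hn
  set S : Ω → ℝ := fun ω => ∑ i ∈ Finset.range n, g (X i ω) with hS
  have hSsum : S = ∑ i ∈ Finset.range n, fun ω => g (X i ω) := by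
    funext ω; simp [hS]
  have hS2 : MemLp S 2 ℙ := by
    rw [hSsum]; exact memLp_finset_sum' _ fun i _ => hY2 i
  have hES : ∫ ω, S ω ∂ℙ = n * ∫ ω, g (X 0 ω) ∂ℙ := by
    rw [hS]
    rw [integral_finset_sum _ fun i _ => (hY2 i).integrable one_le_two]
    rw [Finset.sum_congr rfl fun i _ => (hident' i).integral_eq]
    simp [mul_comm]
  have hVarS : variance S ℙ = n * variance (fun ω => g (X 0 ω)) ℙ := by
    rw [hSsum, IndepFun.variance_sum (fun i _ => hY2 i)
      (fun i _ j _ hij => (hindep.comp (fun _ => g) (fun _ => hg)).indepFun hij)]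
    rw [Finset.sum_congr rfl fun i _ => (hident' i).variance_eq]
    simp [mul_comm]
  have hmain := meas_ge_le_variance_div_sq (μ := ℙ) hS2 (c := (n : ℝ) * t) (by positivity)
  rw [hES, hVarS] at hmain
  refine hmain.trans (le_of_eq ?_)
  congr 1
  rw [mul_pow]
  rw [show ((n:ℝ))^2 = n * n by ring]
  field_simp

end Chebyshev



set_option maxHeartbeats 2000000 in
/-- Explicit high-probability ULLN bound on the sieve, via Chebyshev, a finite
`δ`-net (`δ = ε'/(6 m₁)`), and a union bound:
`P(sup_{θ∈S_{m,ε}} |n⁻¹ℓ_n(θ) − ℓ(θ)| > ε') ≤ (m₂−m₁²)/(n m₁²) + 9 M D/(n ε'²)`. -/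
theorem mixture_ULLN_high_probability (k n M : ℕ) (hk : 2 ≤ k) (hn : 1 ≤ n)
    (m ε : ℝ) (hm : 1 ≤ m) (hε : 0 < ε) (hεk : ε ≤ 1 / k)
    {Ω : Type*} [MeasureSpace Ω] [IsProbabilityMeasure (ℙ : Measure Ω)]
    (X : ℕ → Ω → ℝ) (hmeas : ∀ i, Measurable (X i))
    (hindep : iIndepFun X ℙ)
    (hident : ∀ i, IdentDistrib (X i) (X 0) ℙ ℙ)
    (hmom : Integrable (fun ω => (X 0 ω) ^ 4) ℙ)
    -- population log-likelihood
    (ℓbar : MixParam k → ℝ)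
    (hℓbar : ∀ θ : MixParam k, ℓbar θ = ∫ ω, Real.log (mixDensity k θ (X 0 ω)) ∂ℙ)
    -- second-moment bound on the sieve
    (D : ℝ)
    (hD : ∀ θ : MixParam k, memSieve k m ε θ →
      (∫ ω, (Real.log (mixDensity k θ (X 0 ω))) ^ 2 ∂ℙ) ≤ D)
    -- random Lipschitz slope
    (L : ℝ → ℝ) (hL0 : ∀ x, 0 ≤ L x)
    (hLip : ∀ θ θ' : MixParam k, memSieve k m ε θ → memSieve k m ε θ' → ∀ x : ℝ,
      |Real.log (mixDensity k θ x) - Real.log (mixDensity k θ' x)|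
        ≤ L x * paramDist k θ θ')
    (m₁ m₂ : ℝ)
    (hLint : Integrable (fun ω => L (X 0 ω)) ℙ)
    (hL2int : Integrable (fun ω => (L (X 0 ω)) ^ 2) ℙ)
    (hm₁ : m₁ = ∫ ω, L (X 0 ω) ∂ℙ) (hm₁pos : 0 < m₁)
    (hm₂ : m₂ = ∫ ω, (L (X 0 ω)) ^ 2 ∂ℙ)
    -- tolerance and finite δ-net with δ = ε'/(6 m₁)
    (ε' : ℝ) (hε'0 : 0 < ε') (hε'1 : ε' < 1)
    (T : Fin M → MixParam k) (hT : ∀ j, memSieve k m ε (T j))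
    (hnet : ∀ θ : MixParam k, memSieve k m ε θ →
      ∃ j : Fin M, paramDist k θ (T j) ≤ ε' / (6 * m₁)) :
    (ℙ {ω : Ω | ε' <
        ⨆ θ : {θ : MixParam k // memSieve k m ε θ},
          |(1 / n : ℝ) * ∑ i ∈ Finset.range n, Real.log (mixDensity k θ.1 (X i ω))
            - ℓbar θ.1|}).toReal
      ≤ (m₂ - m₁ ^ 2) / (n * m₁ ^ 2) + 9 * M * D / (n * ε' ^ 2) := by
  classical
  have hk1 : 1 ≤ k := le_trans one_le_two hk
  have hkR : (1:ℝ) ≤ (k:ℝ) := by exact_mod_cast hk1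
  have hε1 : ε ≤ 1 := hεk.trans (by rw [div_le_one (by linarith)]; linarith)
  have hnR : (0:ℝ) < n := by exact_mod_cast hn
  set θ₀ : MixParam k := (fun _ => (k : ℝ)⁻¹, fun _ => 0, fun _ => 1) with hθ₀def
  have hθ₀ : memSieve k m ε θ₀ := memSieve_basepoint k m ε hk hm hε hεk
  haveI hSubNE : Nonempty {θ : MixParam k // memSieve k m ε θ} := ⟨⟨θ₀, hθ₀⟩⟩
  set A' : ℝ := m + Real.log 3 - Real.log ε + m ^ 2 * Real.exp (2 * m) with hA'def
  set B' : ℝ := Real.exp (2 * m) with hB'def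
  -- integrability of X², and of (A' + B' x²)²-type bounds
  have hX2int : Integrable (fun ω => (X 0 ω) ^ 2) ℙ := by
    refine ((integrable_const (1:ℝ)).add hmom).mono'
      (((hmeas 0).pow_const 2).aestronglyMeasurable) (Filter.Eventually.of_forall fun ω => ?_)
    rw [Real.norm_eq_abs, abs_of_nonneg (sq_nonneg _)]
    simp only [Pi.add_apply]
    nlinarith [sq_nonneg ((X 0 ω) ^ 2 - 1), sq_nonneg ((X 0 ω) ^ 2)]
  -- MemLp 2 of the log-density compositions at time 0
  have hMem2 : ∀ θ : MixParam k, memSieve k m ε θ →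
      MemLp (fun ω => Real.log (mixDensity k θ (X 0 ω))) 2 ℙ := by
    intro θ hθs
    have hmf : Measurable fun ω => Real.log (mixDensity k θ (X 0 ω)) :=
      (measurable_log_mixDensity θ).comp (hmeas 0)
    refine (memLp_two_iff_integrable_sq hmf.aestronglyMeasurable).mpr ?_
    have hbnd : Integrable (fun ω => A' ^ 2 + 2 * A' * B' * (X 0 ω) ^ 2
        + B' ^ 2 * (X 0 ω) ^ 4) ℙ :=
      ((integrable_const (A' ^ 2)).add (hX2int.const_mul (2 * A' * B'))).add
        (hmom.const_mul (B' ^ 2))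
    refine hbnd.mono' ((hmf.pow_const 2).aestronglyMeasurable)
      (Filter.Eventually.of_forall fun ω => ?_)
    have hs := abs_log_mixDensity_le hk1 hm hε hε1 hθs (X 0 ω)
    rw [Real.norm_eq_abs, abs_of_nonneg (sq_nonneg _)]
    calc (Real.log (mixDensity k θ (X 0 ω))) ^ 2
        = |Real.log (mixDensity k θ (X 0 ω))| ^ 2 := (sq_abs _).symm
      _ ≤ (A' + B' * (X 0 ω) ^ 2) ^ 2 := by
          exact pow_le_pow_left₀ (abs_nonneg _) hs 2
      _ = A' ^ 2 + 2 * A' * B' * (X 0 ω) ^ 2 + B' ^ 2 * (X 0 ω) ^ 4 := by ring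
  have hInt1 : ∀ θ : MixParam k, memSieve k m ε θ →
      Integrable (fun ω => Real.log (mixDensity k θ (X 0 ω))) ℙ :=
    fun θ hθs => (hMem2 θ hθs).integrable one_le_two
  -- ==== construction of the measurable Lipschitz minorant Λ ====
  obtain ⟨Dc, hDcount, hDdense⟩ :=
    TopologicalSpace.exists_countable_dense {θ : MixParam k // memSieve k m ε θ}
  haveI : Countable Dc := hDcount.to_subtype
  set ratio : {θ : MixParam k // memSieve k m ε θ} → Fin M → ℝ → ℝ := fun θ j x =>
    |Real.log (mixDensity k θ.1 x) - Real.log (mixDensity k (T j) x)|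
      / paramDist k θ.1 (T j) with hratiodef
  set Λe : ℝ → ENNReal := fun x => ⨆ (θ : Dc) (j : Fin M), ENNReal.ofReal (ratio θ.1 j x)
    with hΛedef
  set Λ : ℝ → ℝ := fun x => (Λe x).toReal with hΛdef
  have hratio_nonneg : ∀ θ j x, 0 ≤ ratio θ j x :=
    fun θ j x => div_nonneg (abs_nonneg _) (paramDist_nonneg _ _ _)
  have hratio_le_L : ∀ (θ : {θ : MixParam k // memSieve k m ε θ}) (j : Fin M) (x : ℝ),
      ratio θ j x ≤ L x := by
    intro θ j x
    rcases (paramDist_nonneg k θ.1 (T j)).eq_or_lt with h0 | hpos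
    · rw [hratiodef]; simp only [← h0, div_zero]; exact hL0 x
    · rw [hratiodef]
      exact (div_le_iff₀ hpos).mpr (hLip θ.1 (T j) θ.2 (hT j) x)
  have hΛe_le : ∀ x, Λe x ≤ ENNReal.ofReal (L x) := fun x =>
    iSup₂_le fun θ j => ENNReal.ofReal_le_ofReal (hratio_le_L θ.1 j x)
  have hΛetop : ∀ x, Λe x ≠ ⊤ := fun x =>
    ((hΛe_le x).trans_lt ENNReal.ofReal_lt_top).ne
  have hΛ0 : ∀ x, 0 ≤ Λ x := fun x => ENNReal.toReal_nonneg
  have hΛleL : ∀ x, Λ x ≤ L x := fun x =>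
    ENNReal.toReal_le_of_le_ofReal (hL0 x) (hΛe_le x)
  have hΛmeas : Measurable Λ := by
    rw [hΛdef]
    refine Measurable.ennreal_toReal ?_
    rw [hΛedef]
    refine Measurable.iSup fun θ => Measurable.iSup fun j => ?_
    exact (((measurable_log_mixDensity _).sub (measurable_log_mixDensity _)).abs.div_const
      _).ennreal_ofReal
  have hratioΛ : ∀ (θ : {θ : MixParam k // memSieve k m ε θ}), θ ∈ Dc →
      ∀ (j : Fin M) (x : ℝ), ratio θ j x ≤ Λ x := by
    intro θ hθ j x
    have h1 : ENNReal.ofReal (ratio θ j x) ≤ Λe x := by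
      rw [hΛedef]
      exact le_iSup₂ (f := fun (θ : Dc) (j : Fin M) => ENNReal.ofReal (ratio θ.1 j x))
        ⟨θ, hθ⟩ j
    calc ratio θ j x = (ENNReal.ofReal (ratio θ j x)).toReal :=
          (ENNReal.toReal_ofReal (hratio_nonneg θ j x)).symm
      _ ≤ (Λe x).toReal := ENNReal.toReal_mono (hΛetop x) h1
  have hΛlip : ∀ (θ : {θ : MixParam k // memSieve k m ε θ}) (j : Fin M) (x : ℝ),
      |Real.log (mixDensity k θ.1 x) - Real.log (mixDensity k (T j) x)|
        ≤ Λ x * paramDist k θ.1 (T j) := by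
    intro θ j x
    have hclosed : IsClosed {θ : {θ : MixParam k // memSieve k m ε θ} |
        |Real.log (mixDensity k θ.1 x) - Real.log (mixDensity k (T j) x)|
          ≤ Λ x * paramDist k θ.1 (T j)} := by
      refine isClosed_le ?_ ?_
      · exact ((continuous_log_mixDensity_subtype hk1 hε x).sub continuous_const).abs
      · exact continuous_const.mul (continuous_paramDist_subtype (T j))
    have hsub : Dc ⊆ {θ : {θ : MixParam k // memSieve k m ε θ} |
        |Real.log (mixDensity k θ.1 x) - Real.log (mixDensity k (T j) x)|
          ≤ Λ x * paramDist k θ.1 (T j)} := by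
      intro θd hθd
      rcases (paramDist_nonneg k θd.1 (T j)).eq_or_lt with h0 | hpos
      · show |Real.log (mixDensity k θd.1 x) - Real.log (mixDensity k (T j) x)|
          ≤ Λ x * paramDist k θd.1 (T j)
        have h2 := hLip θd.1 (T j) θd.2 (hT j) x
        rw [← h0, mul_zero] at h2 ⊢
        exact h2
      · show |Real.log (mixDensity k θd.1 x) - Real.log (mixDensity k (T j) x)|
          ≤ Λ x * paramDist k θd.1 (T j)
        have h2 := hratioΛ θd hθd j x
        rw [hratiodef] at h2
        calc |Real.log (mixDensity k θd.1 x) - Real.log (mixDensity k (T j) x)|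
            = |Real.log (mixDensity k θd.1 x) - Real.log (mixDensity k (T j) x)|
              / paramDist k θd.1 (T j) * paramDist k θd.1 (T j) := by
              field_simp
          _ ≤ Λ x * paramDist k θd.1 (T j) :=
              mul_le_mul_of_nonneg_right h2 (paramDist_nonneg _ _ _)
    have hall : closure Dc ⊆ _ := closure_minimal hsub hclosed
    exact hall (by rw [hDdense.closure_eq]; exact Set.mem_univ θ)
  -- ==== moments of Λ ====
  have hZmeas : ∀ i : ℕ, Measurable fun ω => Λ (X i ω) := fun i => hΛmeas.comp (hmeas i)
  have hZint : Integrable (fun ω => Λ (X 0 ω)) ℙ := by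
    refine hLint.mono' (hZmeas 0).aestronglyMeasurable
      (Filter.Eventually.of_forall fun ω => ?_)
    rw [Real.norm_eq_abs, abs_of_nonneg (hΛ0 _)]
    exact hΛleL _
  have hZsq : Integrable (fun ω => Λ (X 0 ω) ^ 2) ℙ := by
    refine hL2int.mono' (((hZmeas 0).pow_const 2).aestronglyMeasurable)
      (Filter.Eventually.of_forall fun ω => ?_)
    rw [Real.norm_eq_abs, abs_of_nonneg (sq_nonneg _)]
    exact pow_le_pow_left₀ (hΛ0 _) (hΛleL _) 2
  have hZ2 : MemLp (fun ω => Λ (X 0 ω)) 2 ℙ :=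
    (memLp_two_iff_integrable_sq (hZmeas 0).aestronglyMeasurable).mpr hZsq
  set a : ℝ := ∫ ω, Λ (X 0 ω) ∂ℙ with hadef
  have ha0 : 0 ≤ a := integral_nonneg fun ω => hΛ0 _
  have ha_le : a ≤ m₁ := by
    rw [hadef, hm₁]
    exact integral_mono hZint hLint fun ω => hΛleL _
  have hEΛ2 : (∫ ω, Λ (X 0 ω) ^ 2 ∂ℙ) ≤ m₂ := by
    rw [hm₂]
    exact integral_mono hZsq hL2int fun ω => pow_le_pow_left₀ (hΛ0 _) (hΛleL _) 2
  -- W = L ∘ X 0 facts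
  have hW2 : MemLp (fun ω => L (X 0 ω)) 2 ℙ :=
    (memLp_two_iff_integrable_sq hLint.aestronglyMeasurable).mpr hL2int
  have hs2 : 0 ≤ m₂ - m₁ ^ 2 := by
    have h := variance_nonneg (fun ω => L (X 0 ω)) ℙ
    rw [variance_eq_sub hW2] at h
    simp only [Pi.pow_apply] at h
    rw [← hm₂, ← hm₁] at h
    linarith
  have hD0 : 0 ≤ D :=
    le_trans (integral_nonneg fun ω => sq_nonneg _) (hD θ₀ hθ₀)
  -- ==== events ====
  set Aev : Fin M → Set Ω := fun j =>
    {ω | (n : ℝ) * (ε' / 3) ≤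
      |(∑ i ∈ Finset.range n, Real.log (mixDensity k (T j) (X i ω)))
        - n * ∫ ω, Real.log (mixDensity k (T j) (X 0 ω)) ∂ℙ|} with hAevdef
  set Bev : Set Ω :=
    {ω | (n : ℝ) * (3 * m₁) < ∑ i ∈ Finset.range n, Λ (X i ω)} with hBevdef
  -- inclusion of the bad event
  have hincl : {ω : Ω | ε' <
      ⨆ θ : {θ : MixParam k // memSieve k m ε θ},
        |(1 / n : ℝ) * ∑ i ∈ Finset.range n, Real.log (mixDensity k θ.1 (X i ω))
          - ℓbar θ.1|} ⊆ (⋃ j, Aev j) ∪ Bev := by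
    intro ω hω
    by_contra hc
    rw [Set.mem_union, not_or] at hc
    obtain ⟨hcA, hcB⟩ := hc
    rw [Set.mem_iUnion, not_exists] at hcA
    have hB' : (∑ i ∈ Finset.range n, Λ (X i ω)) ≤ (n : ℝ) * (3 * m₁) :=
      le_of_not_gt hcB
    have hsup : (⨆ θ : {θ : MixParam k // memSieve k m ε θ},
        |(1 / n : ℝ) * ∑ i ∈ Finset.range n, Real.log (mixDensity k θ.1 (X i ω))
          - ℓbar θ.1|) ≤ ε' := by
      refine ciSup_le fun θ => ?_
      obtain ⟨j, hj⟩ := hnet θ.1 θ.2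
      have hA' : |(∑ i ∈ Finset.range n, Real.log (mixDensity k (T j) (X i ω)))
          - n * ℓbar (T j)| < (n : ℝ) * (ε' / 3) := by
        have := hcA j
        rw [hAevdef, Set.mem_setOf_eq, not_le] at this
        rwa [hℓbar (T j)]
      set u : ℝ := ∑ i ∈ Finset.range n, Real.log (mixDensity k θ.1 (X i ω)) with hudef
      set v : ℝ := ∑ i ∈ Finset.range n, Real.log (mixDensity k (T j) (X i ω)) with hvdef
      set δ : ℝ := ε' / (6 * m₁) with hδdef
      have hδ0 : 0 ≤ δ := by rw [hδdef]; positivity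
      have h1 : |u - v| ≤ (n : ℝ) * (ε' / 2) := by
        rw [hudef, hvdef, ← Finset.sum_sub_distrib]
        refine (Finset.abs_sum_le_sum_abs _ _).trans ?_
        have step : ∀ i ∈ Finset.range n,
            |Real.log (mixDensity k θ.1 (X i ω)) - Real.log (mixDensity k (T j) (X i ω))|
              ≤ Λ (X i ω) * δ := fun i _ =>
          (hΛlip θ j (X i ω)).trans (mul_le_mul_of_nonneg_left hj (hΛ0 _))
        refine (Finset.sum_le_sum step).trans ?_
        rw [← Finset.sum_mul]
        calc (∑ i ∈ Finset.range n, Λ (X i ω)) * δ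
            ≤ ((n : ℝ) * (3 * m₁)) * δ := mul_le_mul_of_nonneg_right hB' hδ0
          _ = (n : ℝ) * (ε' / 2) := by
              rw [hδdef]; field_simp; ring
      have h3 : |ℓbar (T j) - ℓbar θ.1| ≤ ε' / 6 := by
        rw [hℓbar (T j), hℓbar θ.1,
          ← integral_sub (hInt1 (T j) (hT j)) (hInt1 θ.1 θ.2)]
        have habs : |∫ ω, (Real.log (mixDensity k (T j) (X 0 ω))
            - Real.log (mixDensity k θ.1 (X 0 ω))) ∂ℙ|
            ≤ ∫ ω, |Real.log (mixDensity k (T j) (X 0 ω))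
              - Real.log (mixDensity k θ.1 (X 0 ω))| ∂ℙ := by
          rw [← Real.norm_eq_abs]
          refine (norm_integral_le_integral_norm _).trans (le_of_eq ?_)
          simp [Real.norm_eq_abs]
        refine habs.trans ?_
        have hptw : ∀ ω', |Real.log (mixDensity k (T j) (X 0 ω'))
            - Real.log (mixDensity k θ.1 (X 0 ω'))| ≤ L (X 0 ω') * δ := by
          intro ω'
          rw [abs_sub_comm]
          exact (hLip θ.1 (T j) θ.2 (hT j) (X 0 ω')).trans
            (mul_le_mul_of_nonneg_left hj (hL0 _))
        calc (∫ ω, |Real.log (mixDensity k (T j) (X 0 ω))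
              - Real.log (mixDensity k θ.1 (X 0 ω))| ∂ℙ)
            ≤ ∫ ω, L (X 0 ω) * δ ∂ℙ := by
              refine integral_mono ((hInt1 (T j) (hT j)).sub (hInt1 θ.1 θ.2)).abs
                (hLint.mul_const δ) hptw
          _ = m₁ * δ := by rw [integral_mul_const, ← hm₁]
          _ = ε' / 6 := by rw [hδdef]; field_simp
      have keyeq : (1 / n : ℝ) * u - ℓbar θ.1
          = ((u - v) + (v - n * ℓbar (T j))) * (1 / n) + (ℓbar (T j) - ℓbar θ.1) := by
        field_simp
        ring
      calc |(1 / n : ℝ) * u - ℓbar θ.1|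
          ≤ (|u - v| + |v - n * ℓbar (T j)|) * (1 / n) + |ℓbar (T j) - ℓbar θ.1| := by
            rw [keyeq]
            refine (abs_add_le _ _).trans (add_le_add ?_ le_rfl)
            rw [abs_mul, abs_of_pos (by positivity : (0:ℝ) < 1 / (n:ℝ))]
            exact mul_le_mul_of_nonneg_right (abs_add_le _ _) (by positivity)
        _ ≤ ((n : ℝ) * (ε' / 2) + (n : ℝ) * (ε' / 3)) * (1 / n) + ε' / 6 :=
            add_le_add (mul_le_mul_of_nonneg_right (add_le_add h1 hA'.le)
              (by positivity)) h3
        _ = ε' := by field_simp; ring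
    exact absurd hω (by rw [Set.mem_setOf_eq]; exact not_lt.mpr hsup)
  -- ==== probability of each net event ====
  have hPA : ∀ j : Fin M, ℙ (Aev j) ≤ ENNReal.ofReal (9 * D / (n * ε' ^ 2)) := by
    intro j
    have hcheb := cheb_sum X hindep hident
      (fun x => Real.log (mixDensity k (T j) x)) (measurable_log_mixDensity (T j))
      (hMem2 (T j) (hT j)) n hn (ε' / 3) (by positivity)
    refine le_trans (le_of_eq (by rw [hAevdef])) (hcheb.trans ?_)
    apply ENNReal.ofReal_le_ofReal
    have hvar : variance (fun ω => Real.log (mixDensity k (T j) (X 0 ω))) ℙ ≤ D := by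
      rw [variance_eq_sub (hMem2 (T j) (hT j))]
      simp only [Pi.pow_apply]
      have := hD (T j) (hT j)
      nlinarith [sq_nonneg (∫ ω, Real.log (mixDensity k (T j) (X 0 ω)) ∂ℙ)]
    calc variance (fun ω => Real.log (mixDensity k (T j) (X 0 ω))) ℙ / ((n:ℝ) * (ε'/3)^2)
        ≤ D / ((n:ℝ) * (ε'/3)^2) :=
          by gcongr
             all_goals first | exact hvar | exact hD0 | positivity
      _ = 9 * D / (n * ε' ^ 2) := by field_simp; ring
  -- ==== probability of the Lipschitz-average event ====
  have hPB : ℙ Bev ≤ ENNReal.ofReal ((m₂ - m₁ ^ 2) / (n * m₁ ^ 2)) := by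
    by_cases hcase : 4 * m₁ ^ 2 ≤ 3 * m₂
    · -- raw Chebyshev on Λ
      have htpos : (0:ℝ) < 3 * m₁ - a := by linarith
      have hcheb := cheb_sum X hindep hident Λ hΛmeas hZ2 n hn (3 * m₁ - a) htpos
      have hsubset : Bev ⊆ {ω | (n : ℝ) * (3 * m₁ - a)
          ≤ |(∑ i ∈ Finset.range n, Λ (X i ω)) - n * ∫ ω, Λ (X 0 ω) ∂ℙ|} := by
        intro ω hω
        rw [hBevdef, Set.mem_setOf_eq] at hω
        rw [Set.mem_setOf_eq, ← hadef]
        refine le_trans ?_ (le_abs_self _)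
        rw [mul_sub]
        exact sub_le_sub_right hω.le _
      refine (measure_mono hsubset).trans (hcheb.trans (ENNReal.ofReal_le_ofReal ?_))
      have hvarZ : variance (fun ω => Λ (X 0 ω)) ℙ ≤ m₂ - a ^ 2 := by
        rw [variance_eq_sub hZ2]
        simp only [Pi.pow_apply]
        rw [← hadef]
        linarith [hEΛ2]
      have hvar0 : 0 ≤ variance (fun ω => Λ (X 0 ω)) ℙ := variance_nonneg _ _
      have h4 : m₂ - a ^ 2 ≤ 4 * (m₂ - m₁ ^ 2) := by nlinarith [sq_nonneg a]
      have h5 : 4 * m₁ ^ 2 ≤ (3 * m₁ - a) ^ 2 := by nlinarith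
      rw [div_le_div_iff₀ (by positivity) (by positivity)]
      nlinarith [mul_le_mul_of_nonneg_right (hvarZ.trans h4)
          (by positivity : (0:ℝ) ≤ (n:ℝ) * m₁ ^ 2),
        mul_le_mul_of_nonneg_left h5 (mul_nonneg hs2 hnR.le)]
    · -- truncated variable Y = max Λ m₁
      push_neg at hcase
      set s : ℝ := Real.sqrt (m₂ - m₁ ^ 2) with hsdef
      have hssq : s ^ 2 = m₂ - m₁ ^ 2 := Real.sq_sqrt hs2
      have hs0 : 0 ≤ s := Real.sqrt_nonneg _
      have hslt : s < m₁ := by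
        refine lt_of_pow_lt_pow_left₀ 2 hm₁pos.le ?_
        rw [hssq]; nlinarith
      set Y : ℝ → ℝ := fun x => max (Λ x) m₁ with hYdef
      have hYmeas : Measurable Y := hΛmeas.max measurable_const
      have hY_ge : ∀ x, m₁ ≤ Y x := fun x => le_max_right _ _
      have hY_geΛ : ∀ x, Λ x ≤ Y x := fun x => le_max_left _ _
      have hY_le : ∀ ω, Y (X 0 ω) ≤ m₁ + |L (X 0 ω) - m₁| := by
        intro ω
        have h1 : Λ (X 0 ω) ≤ m₁ + |L (X 0 ω) - m₁| := by
          have := hΛleL (X 0 ω)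
          have h2 := le_abs_self (L (X 0 ω) - m₁)
          linarith
        have h3 : m₁ ≤ m₁ + |L (X 0 ω) - m₁| := by
          have := abs_nonneg (L (X 0 ω) - m₁); linarith
        exact max_le h1 h3
      have hYint : Integrable (fun ω => Y (X 0 ω)) ℙ := by
        refine ((integrable_const m₁).add ((hLint.sub (integrable_const m₁)).abs)).mono'
          ((hYmeas.comp (hmeas 0)).aestronglyMeasurable)
          (Filter.Eventually.of_forall fun ω => ?_)
        rw [Real.norm_eq_abs, abs_of_nonneg (le_trans hm₁pos.le (hY_ge _))]
        exact hY_le ω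
      have hYsq : Integrable (fun ω => Y (X 0 ω) ^ 2) ℙ := by
        have hbnd : Integrable (fun ω => (m₁ + |L (X 0 ω) - m₁|) ^ 2) ℙ := by
          have h1 : Integrable (fun ω => m₁ ^ 2 + 2 * m₁ * |L (X 0 ω) - m₁|
              + (L (X 0 ω) - m₁) ^ 2) ℙ := by
            refine ((integrable_const (m₁ ^ 2)).add
              (((hLint.sub (integrable_const m₁)).abs.const_mul (2 * m₁)))).add ?_
            have : Integrable (fun ω => L (X 0 ω) ^ 2 - 2 * m₁ * L (X 0 ω) + m₁ ^ 2) ℙ :=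
              (hL2int.sub (hLint.const_mul (2 * m₁))).add (integrable_const _)
            refine this.congr (Filter.Eventually.of_forall fun ω => by ring)
          refine h1.congr (Filter.Eventually.of_forall fun ω => ?_)
          show m₁ ^ 2 + 2 * m₁ * |L (X 0 ω) - m₁| + (L (X 0 ω) - m₁) ^ 2
              = (m₁ + |L (X 0 ω) - m₁|) ^ 2
          rw [← sq_abs (L (X 0 ω) - m₁)]
          ring
        refine hbnd.mono' (((hYmeas.comp (hmeas 0)).pow_const 2).aestronglyMeasurable)
          (Filter.Eventually.of_forall fun ω => ?_)
        rw [Real.norm_eq_abs, abs_of_nonneg (sq_nonneg _)]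
        refine pow_le_pow_left₀ (le_trans hm₁pos.le (hY_ge _)) (hY_le ω) 2
      have hY2 : MemLp (fun ω => Y (X 0 ω)) 2 ℙ :=
        (memLp_two_iff_integrable_sq
          ((hYmeas.comp (hmeas 0)).aestronglyMeasurable)).mpr hYsq
      set q : ℝ := ∫ ω, Y (X 0 ω) ∂ℙ with hqdef
      have hq_ge : m₁ ≤ q := by
        rw [hqdef]
        calc m₁ = ∫ _ω, m₁ ∂ℙ := by simp
          _ ≤ ∫ ω, Y (X 0 ω) ∂ℙ := integral_mono (integrable_const _) hYint
            fun ω => hY_ge _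
      -- E|W - m₁| ≤ s  via Cauchy–Schwarz (variance nonneg trick)
      have habs2 : MemLp (fun ω => |L (X 0 ω) - m₁|) 2 ℙ :=
        (hW2.sub (memLp_const m₁)).abs
      have hvarW : variance (fun ω => L (X 0 ω)) ℙ = m₂ - m₁ ^ 2 := by
        rw [variance_eq_sub hW2]
        simp only [Pi.pow_apply]
        rw [← hm₂, ← hm₁]
      have hWsubsq : (∫ ω, (L (X 0 ω) - m₁) ^ 2 ∂ℙ) = m₂ - m₁ ^ 2 := by
        rw [← hvarW, variance_eq_integral hW2.aemeasurable]
        refine integral_congr_ae (Filter.Eventually.of_forall fun ω => ?_)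
        simp only [Pi.pow_apply, Pi.sub_apply]
        rw [← hm₁]
      have hEabs : (∫ ω, |L (X 0 ω) - m₁| ∂ℙ) ≤ s := by
        have hvnn := variance_nonneg (fun ω => |L (X 0 ω) - m₁|) ℙ
        rw [variance_eq_sub habs2] at hvnn
        simp only [Pi.pow_apply, sq_abs] at hvnn
        rw [hWsubsq] at hvnn
        have hq0 : 0 ≤ ∫ ω, |L (X 0 ω) - m₁| ∂ℙ := integral_nonneg fun ω => abs_nonneg _
        refine le_of_pow_le_pow_left₀ (two_ne_zero) hs0 ?_
        rw [hssq]
        linarith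
      have hq_le : q ≤ m₁ + s := by
        rw [hqdef]
        calc (∫ ω, Y (X 0 ω) ∂ℙ) ≤ ∫ ω, (m₁ + |L (X 0 ω) - m₁|) ∂ℙ :=
              integral_mono hYint
                ((integrable_const m₁).add ((hLint.sub (integrable_const m₁)).abs))
                fun ω => hY_le ω
          _ = m₁ + ∫ ω, |L (X 0 ω) - m₁| ∂ℙ := by
              have habsint : Integrable (fun ω => |L (X 0 ω) - m₁|) ℙ :=
                (hLint.sub (integrable_const m₁)).abs
              rw [integral_add (integrable_const m₁) habsint, integral_const]
              simp
          _ ≤ m₁ + s := by linarith [hEabs]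
      have htpos : (0:ℝ) < 3 * m₁ - q := by linarith
      -- variance of Y ≤ s²
      have hvarY : variance (fun ω => Y (X 0 ω)) ℙ ≤ s ^ 2 := by
        have hYm1sq : (∫ ω, (Y (X 0 ω) - m₁) ^ 2 ∂ℙ) ≤ m₂ - m₁ ^ 2 := by
          rw [← hWsubsq]
          refine integral_mono ?_ ((hW2.sub (memLp_const m₁)).integrable_sq) ?_
          · exact (hY2.sub (memLp_const m₁)).integrable_sq
          · intro ω
            have h1 : 0 ≤ Y (X 0 ω) - m₁ := by linarith [hY_ge (X 0 ω)]
            have h2 : Y (X 0 ω) - m₁ ≤ |L (X 0 ω) - m₁| := by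
              have := hY_le ω; linarith
            simpa [sq_abs] using pow_le_pow_left₀ h1 h2 2
        have hexpand : (∫ ω, (Y (X 0 ω) - m₁) ^ 2 ∂ℙ)
            = (∫ ω, Y (X 0 ω) ^ 2 ∂ℙ) - 2 * m₁ * q + m₁ ^ 2 := by
          have hYc : Integrable (fun ω => 2 * m₁ * Y (X 0 ω)) ℙ := hYint.const_mul (2 * m₁)
          have hYsc : Integrable (fun ω => Y (X 0 ω) ^ 2 - 2 * m₁ * Y (X 0 ω)) ℙ :=
            hYsq.sub hYc
          have h0 : (∫ ω, (Y (X 0 ω) - m₁) ^ 2 ∂ℙ)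
              = ∫ ω, (Y (X 0 ω) ^ 2 - 2 * m₁ * Y (X 0 ω) + m₁ ^ 2) ∂ℙ :=
            integral_congr_ae (Filter.Eventually.of_forall fun ω => by ring)
          rw [h0, integral_add hYsc (integrable_const _), integral_sub hYsq hYc,
            integral_const_mul (2 * m₁), integral_const]
          have : (∫ ω, Y (X 0 ω) ∂ℙ) = q := hqdef.symm
          rw [this]
          simp
        have hvar_eq : variance (fun ω => Y (X 0 ω)) ℙ
            = (∫ ω, Y (X 0 ω) ^ 2 ∂ℙ) - q ^ 2 := by
          rw [variance_eq_sub hY2]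
          simp only [Pi.pow_apply, ← hqdef]
        rw [hssq]
        nlinarith [sq_nonneg (q - m₁)]
      have hcheb := cheb_sum X hindep hident Y hYmeas hY2 n hn (3 * m₁ - q) htpos
      have hsubset : Bev ⊆ {ω | (n : ℝ) * (3 * m₁ - q)
          ≤ |(∑ i ∈ Finset.range n, Y (X i ω)) - n * ∫ ω, Y (X 0 ω) ∂ℙ|} := by
        intro ω hω
        rw [hBevdef, Set.mem_setOf_eq] at hω
        rw [Set.mem_setOf_eq, ← hqdef]
        have hsum : (n : ℝ) * (3 * m₁) < ∑ i ∈ Finset.range n, Y (X i ω) :=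
          hω.trans_le (Finset.sum_le_sum fun i _ => hY_geΛ (X i ω))
        refine le_trans ?_ (le_abs_self _)
        rw [mul_sub]
        exact sub_le_sub_right hsum.le _
      refine (measure_mono hsubset).trans (hcheb.trans (ENNReal.ofReal_le_ofReal ?_))
      have hm₁t : m₁ ^ 2 ≤ (3 * m₁ - q) ^ 2 := by nlinarith
      rw [div_le_div_iff₀ (by positivity) (by positivity)]
      have hvar0 : 0 ≤ variance (fun ω => Y (X 0 ω)) ℙ := variance_nonneg _ _
      rw [← hssq]
      nlinarith [mul_le_mul_of_nonneg_right hvarY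
          (by positivity : (0:ℝ) ≤ (n:ℝ) * m₁ ^ 2),
        mul_le_mul_of_nonneg_left hm₁t
          (mul_nonneg (by positivity : (0:ℝ) ≤ s ^ 2) hnR.le)]
  -- ==== combine ====
  have hfinal : ℙ {ω : Ω | ε' <
      ⨆ θ : {θ : MixParam k // memSieve k m ε θ},
        |(1 / n : ℝ) * ∑ i ∈ Finset.range n, Real.log (mixDensity k θ.1 (X i ω))
          - ℓbar θ.1|}
      ≤ ENNReal.ofReal ((m₂ - m₁ ^ 2) / (n * m₁ ^ 2) + 9 * M * D / (n * ε' ^ 2)) := by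
    calc ℙ {ω : Ω | ε' <
        ⨆ θ : {θ : MixParam k // memSieve k m ε θ},
          |(1 / n : ℝ) * ∑ i ∈ Finset.range n, Real.log (mixDensity k θ.1 (X i ω))
            - ℓbar θ.1|}
        ≤ ℙ ((⋃ j, Aev j) ∪ Bev) := measure_mono hincl
      _ ≤ ℙ (⋃ j, Aev j) + ℙ Bev := measure_union_le _ _
      _ ≤ (∑ j : Fin M, ℙ (Aev j)) + ℙ Bev :=
          add_le_add_left (measure_iUnion_fintype_le _ _) _
      _ ≤ (∑ _j : Fin M, ENNReal.ofReal (9 * D / (n * ε' ^ 2)))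
          + ENNReal.ofReal ((m₂ - m₁ ^ 2) / (n * m₁ ^ 2)) :=
          add_le_add (Finset.sum_le_sum fun j _ => hPA j) hPB
      _ = ENNReal.ofReal ((M : ℝ) * (9 * D / (n * ε' ^ 2)))
          + ENNReal.ofReal ((m₂ - m₁ ^ 2) / (n * m₁ ^ 2)) := by
          rw [Finset.sum_const, Finset.card_univ, Fintype.card_fin, nsmul_eq_mul,
            ENNReal.ofReal_mul (by positivity : (0:ℝ) ≤ (M:ℝ)), ENNReal.ofReal_natCast]
      _ = ENNReal.ofReal ((m₂ - m₁ ^ 2) / (n * m₁ ^ 2) + 9 * M * D / (n * ε' ^ 2)) := by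
          rw [← ENNReal.ofReal_add (by positivity) (div_nonneg hs2 (by positivity))]
          congr 1
          ring
  refine ENNReal.toReal_le_of_le_ofReal ?_ hfinal
  have c2 : (0:ℝ) ≤ (m₂ - m₁ ^ 2) / (n * m₁ ^ 2) := div_nonneg hs2 (by positivity)
  have c1 : (0:ℝ) ≤ 9 * M * D / (n * ε' ^ 2) := by positivity
  linarith
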